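/- Let q be a prime power, m ≥ 2, and q' = q^m. Setting B = PG(1, q) ⊆ PG(1, q^m) and Orb_B = {gB : g ∈ PGL(2, q^m)}, the pair (PG(1, q^m), Orb_B) is a Steiner system S(3, q+1, q^m+1): every 3-subset of PG(1, q^m) is contained in exactly one block gB. -/

import Mathlib

/-!
`PGL(2, K)` acts sharply 3-transitively on `ℙ¹(K)`: any three distinct points are the image of
the frame `∞ = [1:0]`, `0 = [0:1]`, `1 = [1:1]`, and an element fixing the frame is scalar, hence
acts trivially. The sub-line `ℙ¹(F)` contains the frame and is preserved by `GL(2, F) ⊆ GL(2, K)`,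
which is already 3-transitive on it. So if three distinct points lie on `g • ℙ¹(F)` and on
`g' • ℙ¹(F)`, write them as `g' k` applied to the frame with `k ∈ GL(2, F)`; then `g` and `g' k`
agree on the frame, so `g • ℙ¹(F) = g' k • ℙ¹(F) = g' • ℙ¹(F)`.
-/

open scoped LinearAlgebra.Projectivization
open Projectivization

/-- The action of an invertible matrix on the projective line. -/
noncomputable def pact {K : Type*} [Field K] (g : GL (Fin 2) K) :
    ℙ K (Fin 2 → K) → ℙ K (Fin 2 → K) :=
  Projectivization.map
    (((Matrix.GeneralLinearGroup.toLin g).toLinearEquiv :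
        (Fin 2 → K) ≃ₗ[K] (Fin 2 → K)) : (Fin 2 → K) →ₗ[K] (Fin 2 → K))
    (Matrix.GeneralLinearGroup.toLin g).toLinearEquiv.injective

/-- The sub-line `PG(1, q) ⊆ PG(1, qᵐ)`: the points of the projective line over `K`
admitting a representative with coordinates in the subfield `F`. -/
def subLine (F K : Type*) [Field F] [Field K] [Algebra F K] : Set (ℙ K (Fin 2 → K)) :=
  {x | ∃ (v : Fin 2 → F) (hv : (fun i => algebraMap F K (v i)) ≠ 0),
    x = Projectivization.mk K (fun i => algebraMap F K (v i)) hv}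

open Matrix
open scoped Pointwise

namespace ProjectiveLine

def infty (K : Type*) [Field K] : ℙ K (Fin 2 → K) := mk K ![1, 0] (by simp)
def zero (K : Type*) [Field K] : ℙ K (Fin 2 → K) := mk K ![0, 1] (by simp)
def one (K : Type*) [Field K] : ℙ K (Fin 2 → K) := mk K ![1, 1] (by simp)

section Frame

variable {K : Type*} [Field K]

lemma image_pact (g : GL (Fin 2) K) (S : Set (ℙ K (Fin 2 → K))) : pact g '' S = g • S :=
  rfl

lemma infty_ne_zero : infty K ≠ zero K := by
  simp [infty, zero, mk_eq_mk_iff']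

lemma smul_eq_self_of_fixes_frame {h : GL (Fin 2) K} (h_infty : h • infty K = infty K)
    (h_zero : h • zero K = zero K) (h_one : h • one K = one K) (p : ℙ K (Fin 2 → K)) :
    h • p = p := by
  simp only [infty, zero, one, smul_mk, mk_eq_mk_iff', Units.smul_def] at h_infty h_zero h_one
  obtain ⟨a, ha⟩ := h_infty
  obtain ⟨b, hb⟩ := h_zero
  obtain ⟨c, hc⟩ := h_one
  simp only [smul_cons, smul_eq_mul, mul_one, mul_zero, smul_empty, smul_eq_mulVec,
    mulVec_fin_two, cons_val_zero, cons_val_one, cons_val_fin_one, add_zero, vecCons_inj, and_true,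
    zero_add] at ha hb hc
  have h_scalar : ∀ v : Fin 2 → K, h • v = (h : Matrix (Fin 2) (Fin 2) K) 0 0 • v := fun v => by
    ext i
    fin_cases i <;> simp [Units.smul_def, mulVec_fin_two] <;> grind
  induction p using Projectivization.ind with
  | h v hv => exact (mk_eq_mk_iff' _ _ _ _ _).mpr ⟨_, (h_scalar v).symm⟩

lemma smul_eq_smul_of_eq_on_frame {g g' : GL (Fin 2) K} (h_infty : g • infty K = g' • infty K)
    (h_zero : g • zero K = g' • zero K) (h_one : g • one K = g' • one K) (p : ℙ K (Fin 2 → K)) :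
    g • p = g' • p := by
  rw [← inv_smul_eq_iff, ← mul_smul]
  exact smul_eq_self_of_fixes_frame (by rw [mul_smul, h_infty, inv_smul_smul])
    (by rw [mul_smul, h_zero, inv_smul_smul]) (by rw [mul_smul, h_one, inv_smul_smul]) p

lemma exists_smul_frame_eq_infty_zero {z : ℙ K (Fin 2 → K)} (h_infty : z ≠ infty K)
    (h_zero : z ≠ zero K) :
    ∃ d : GL (Fin 2) K, d • infty K = infty K ∧ d • zero K = zero K ∧ d • one K = z := by
  induction z using Projectivization.ind with
  | h v hv =>
  have hv0 : v 0 ≠ 0 := by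
    refine fun h0 => h_zero ((mk_eq_mk_iff' _ _ _ _ _).mpr ⟨v 1, funext fun i => ?_⟩)
    fin_cases i <;> simp [h0]
  have hv1 : v 1 ≠ 0 := by
    refine fun h1 => h_infty ((mk_eq_mk_iff' _ _ _ _ _).mpr ⟨v 0, funext fun i => ?_⟩)
    fin_cases i <;> simp [h1]
  refine ⟨GeneralLinearGroup.mkOfDetNeZero (diagonal v) (by simp [Fin.prod_univ_two, hv0, hv1]),
    ?_, ?_, ?_⟩
  all_goals
    simp only [infty, zero, one, smul_mk, mk_eq_mk_iff', Units.smul_def]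
  · exact ⟨v 0, funext fun i => by fin_cases i <;> simp [GeneralLinearGroup.mkOfDetNeZero]⟩
  · exact ⟨v 1, funext fun i => by fin_cases i <;> simp [GeneralLinearGroup.mkOfDetNeZero]⟩
  · exact ⟨1, funext fun i => by fin_cases i <;> simp [GeneralLinearGroup.mkOfDetNeZero]⟩

lemma exists_smul_frame_eq {x y z : ℙ K (Fin 2 → K)} (hxy : x ≠ y) (hxz : x ≠ z) (hyz : y ≠ z) :
    ∃ g : GL (Fin 2) K, g • infty K = x ∧ g • zero K = y ∧ g • one K = z := by
  -- `SL(2, K)` is already 2-transitive; a diagonal matrix then moves `1` into place.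
  obtain ⟨s, hs_infty, hs_zero⟩ := MulAction.is_two_pretransitive_iff.mp
    (inferInstance : MulAction.IsMultiplyPretransitive (SpecialLinearGroup (Fin 2) K)
      (ℙ K (Fin 2 → K)) 2) infty_ne_zero hxy
  obtain ⟨d, hd_infty, hd_zero, hd_one⟩ := exists_smul_frame_eq_infty_zero (z := s⁻¹ • z)
    (by rw [Ne, inv_smul_eq_iff, hs_infty]; exact hxz.symm)
    (by rw [Ne, inv_smul_eq_iff, hs_zero]; exact hyz.symm)
  refine ⟨SpecialLinearGroup.toGL s * d, ?_, ?_, ?_⟩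
  · rw [mul_smul, hd_infty]; exact hs_infty
  · rw [mul_smul, hd_zero]; exact hs_zero
  · rw [mul_smul, hd_one]; exact smul_inv_smul s z

end Frame

section SubLine

variable (F K : Type*) [Field F] [Field K] [Algebra F K]

def algebraMapPi (ι : Type*) : (ι → F) →ₛₗ[algebraMap F K] (ι → K) where
  toFun v i := algebraMap F K (v i)
  map_add' u v := by ext; simp
  map_smul' c v := by ext; simp

lemma algebraMapPi_injective (ι : Type*) : Function.Injective (algebraMapPi F K ι) :=
  fun _ _ h => funext fun i => (algebraMap F K).injective (congrFun h i)

noncomputable def subLineIncl : ℙ F (Fin 2 → F) → ℙ K (Fin 2 → K) :=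
  Projectivization.map (algebraMapPi F K (Fin 2)) (algebraMapPi_injective F K (Fin 2))

lemma subLine_eq_range : subLine F K = Set.range (subLineIncl F K) := by
  ext x
  constructor
  · rintro ⟨v, hv, rfl⟩
    exact ⟨mk F v fun h => hv (by ext; simp [h]), rfl⟩
  · rintro ⟨p, rfl⟩
    induction p using Projectivization.ind with
    | h v hv => exact ⟨v, (map_ne_zero_iff _ (algebraMapPi_injective F K _)).mpr hv, rfl⟩

lemma subLineIncl_infty : subLineIncl F K (infty F) = infty K := by
  simp only [subLineIncl, infty, map_mk]
  congr 1
  ext i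
  fin_cases i <;> simp [algebraMapPi]

lemma subLineIncl_zero : subLineIncl F K (zero F) = zero K := by
  simp only [subLineIncl, zero, map_mk]
  congr 1
  ext i
  fin_cases i <;> simp [algebraMapPi]

lemma subLineIncl_one : subLineIncl F K (one F) = one K := by
  simp only [subLineIncl, one, map_mk]
  congr 1
  ext i
  fin_cases i <;> simp [algebraMapPi]

lemma map_smul_subLineIncl (k : GL (Fin 2) F) (p : ℙ F (Fin 2 → F)) :
    GeneralLinearGroup.map (algebraMap F K) k • subLineIncl F K p = subLineIncl F K (k • p) := by
  induction p using Projectivization.ind with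
  | h v hv =>
    simp only [subLineIncl, map_mk, smul_mk]
    congr 1
    ext i
    exact (RingHom.map_mulVec (algebraMap F K) (k : Matrix (Fin 2) (Fin 2) F) v i).symm

lemma map_smul_subLine (k : GL (Fin 2) F) :
    GeneralLinearGroup.map (algebraMap F K) k • subLine F K = subLine F K := by
  rw [subLine_eq_range, Set.smul_set_range]
  simp_rw [map_smul_subLineIncl]
  exact (MulAction.surjective k).range_comp _

lemma frame_subset_subLine : {infty K, zero K, one K} ⊆ subLine F K := by
  rw [subLine_eq_range, ← subLineIncl_infty F K, ← subLineIncl_zero F K, ← subLineIncl_one F K]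
  simp only [Set.insert_subset_iff, Set.mem_range_self, Set.singleton_subset_iff, and_self]

lemma exists_map_smul_frame_eq {x y z : ℙ K (Fin 2 → K)}
    (hx : x ∈ subLine F K) (hy : y ∈ subLine F K) (hz : z ∈ subLine F K)
    (hxy : x ≠ y) (hxz : x ≠ z) (hyz : y ≠ z) :
    ∃ k : GL (Fin 2) F, GeneralLinearGroup.map (algebraMap F K) k • infty K = x ∧
      GeneralLinearGroup.map (algebraMap F K) k • zero K = y ∧
      GeneralLinearGroup.map (algebraMap F K) k • one K = z := by
  rw [subLine_eq_range] at hx hy hz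
  obtain ⟨x, rfl⟩ := hx
  obtain ⟨y, rfl⟩ := hy
  obtain ⟨z, rfl⟩ := hz
  obtain ⟨k, hk_infty, hk_zero, hk_one⟩ :=
    exists_smul_frame_eq (ne_of_apply_ne _ hxy) (ne_of_apply_ne _ hxz) (ne_of_apply_ne _ hyz)
  refine ⟨k, ?_, ?_, ?_⟩
  · rw [← subLineIncl_infty F K, map_smul_subLineIncl, hk_infty]
  · rw [← subLineIncl_zero F K, map_smul_subLineIncl, hk_zero]
  · rw [← subLineIncl_one F K, map_smul_subLineIncl, hk_one]

end SubLine

end ProjectiveLine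

open ProjectiveLine

theorem stmt_19_general (F K : Type*) [Field F] [Field K] [Algebra F K]
    (t : Finset (ℙ K (Fin 2 → K))) (ht : t.card = 3) :
    ∃! S : Set (ℙ K (Fin 2 → K)),
      (∃ g : GL (Fin 2) K, S = pact g '' subLine F K) ∧ ↑t ⊆ S := by
  classical
  obtain ⟨x, y, z, hxy, hxz, hyz, rfl⟩ := Finset.card_eq_three.mp ht
  simp only [image_pact, Finset.coe_insert, Finset.coe_singleton]
  obtain ⟨g, hg_infty, hg_zero, hg_one⟩ := exists_smul_frame_eq hxy hxz hyz
  refine ⟨g • subLine F K, ⟨⟨g, rfl⟩, ?_⟩, ?_⟩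
  · rw [← hg_infty, ← hg_zero, ← hg_one]
    simpa only [Set.smul_set_insert, Set.smul_set_singleton] using
      Set.smul_set_mono (a := g) (frame_subset_subLine F K)
  · rintro _ ⟨⟨g', rfl⟩, hxyz⟩
    simp only [Set.insert_subset_iff, Set.singleton_subset_iff, Set.mem_smul_set] at hxyz
    obtain ⟨⟨x, hx, rfl⟩, ⟨y, hy, rfl⟩, ⟨z, hz, rfl⟩⟩ := hxyz
    obtain ⟨k, hk_infty, hk_zero, hk_one⟩ := exists_map_smul_frame_eq F K hx hy hz
      (ne_of_apply_ne _ hxy) (ne_of_apply_ne _ hxz) (ne_of_apply_ne _ hyz)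
    set k' := GeneralLinearGroup.map (algebraMap F K) k
    have hg : ∀ p, (g' * k') • p = g • p := smul_eq_smul_of_eq_on_frame
      (by rw [mul_smul, hk_infty, hg_infty]) (by rw [mul_smul, hk_zero, hg_zero])
      (by rw [mul_smul, hk_one, hg_one])
    calc g' • subLine F K = g' • k' • subLine F K := by rw [map_smul_subLine]
      _ = (g' * k') • subLine F K := (mul_smul ..).symm
      _ = g • subLine F K := Set.image_congr fun p _ => hg p

theorem stmt_19 (q m : ℕ) (hq : IsPrimePow q) (hm : 2 ≤ m)
    (F K : Type*) [Field F] [Fintype F] [Field K] [Fintype K] [Algebra F K]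
    (hF : Fintype.card F = q) (hK : Fintype.card K = q ^ m)
    (t : Finset (ℙ K (Fin 2 → K))) (ht : t.card = 3) :
    ∃! S : Set (ℙ K (Fin 2 → K)),
      (∃ g : GL (Fin 2) K, S = pact g '' subLine F K) ∧ ↑t ⊆ S :=
  stmt_19_general F K t ht
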